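/- Let Ω be a bounded smooth domain with 0 ∈ Ω, and let u ∈ C¹(Ω̄∖{0}) ∩ C²(Ω∖(Z_u ∪ {0})), u > 0 in Ω, be a solution of problem (4.2) with f nonnegative and f ∈ W^{1,∞}(Ω̄), so that u solves the equation −div(A(|∇u|)∇u) + B(|∇u|) = ϑ u^q/|x|^p + f almost everywhere in Ω. Then the critical set Z_u = {x ∈ Ω : ∇u(x) = 0} has Lebesgue measure zero: |Z_u| = 0. -/

import Mathlib

open MeasureTheory Set Real

noncomputable section

abbrev EucN (N : ℕ) := EuclideanSpace ℝ (Fin N)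

variable {N : ℕ}

/-- `φ` is a smooth compactly supported test function in `U`. -/
def IsTestFun (U : Set (EucN N)) (φ : EucN N → ℝ) : Prop :=
  ContDiff ℝ (⊤ : ℕ∞) φ ∧ HasCompactSupport φ ∧ tsupport φ ⊆ U

/-- `gu` is the weak gradient of `u` on `U`. -/
def HasWeakGrad (U : Set (EucN N)) (u : EucN N → ℝ) (gu : EucN N → EucN N) : Prop :=
  ∀ φ : EucN N → ℝ, IsTestFun U φ → ∀ i : Fin N,
    ∫ x in U, u x * fderiv ℝ φ x (EuclideanSpace.single i 1)
      = - ∫ x in U, gu x i * φ x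

/-- `u` (with weak gradient `gu`) belongs to `W^{1,p}(U)`. -/
def MemW1p (U : Set (EucN N)) (p : ℝ) (u : EucN N → ℝ) (gu : EucN N → EucN N) : Prop :=
  MemLp u (ENNReal.ofReal p) (volume.restrict U) ∧
  MemLp gu (ENNReal.ofReal p) (volume.restrict U) ∧
  HasWeakGrad U u gu

/-- `u` (with weak gradient `gu`) belongs to `W_0^{1,p}(Ω)`: it is in `W^{1,p}` and is
approximable, in the `W^{1,p}` norm, by smooth functions compactly supported in `Ω`. -/
def MemW1p0 (Ω : Set (EucN N)) (p : ℝ) (u : EucN N → ℝ) (gu : EucN N → EucN N) : Prop :=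
  MemW1p Ω p u gu ∧
  ∀ ε : ℝ, 0 < ε → ∃ φ : EucN N → ℝ, IsTestFun Ω φ ∧
    eLpNorm (fun x => u x - φ x) (ENNReal.ofReal p) (volume.restrict Ω)
      + eLpNorm (fun x => gu x - gradient φ x) (ENNReal.ofReal p) (volume.restrict Ω)
      < ENNReal.ofReal ε

-- the vector field `η ↦ A(|η|) η`, extended by `0` at `η = 0`.
open Classical in
def Avec (A : ℝ → ℝ) (v : EucN N) : EucN N := if v = 0 then 0 else A ‖v‖ • v

/-- `u`, with weak gradient `gu`, is a weak solution of
`-div(A(|∇u|) ∇u) + B(|∇u|) = g` in `Ω`, tested against all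
`φ ∈ W_0^{1,p}(Ω) ∩ L^∞(Ω)`. -/
def IsWeakSol (Ω : Set (EucN N)) (p : ℝ) (A B : ℝ → ℝ) (g : EucN N → ℝ)
    (_u : EucN N → ℝ) (gu : EucN N → EucN N) : Prop :=
  ∀ (φ : EucN N → ℝ) (gφ : EucN N → EucN N), MemW1p0 Ω p φ gφ →
    (∃ M : ℝ, ∀ᵐ x ∂(volume.restrict Ω), |φ x| ≤ M) →
    ((∫ x in Ω, (inner ℝ (Avec A (gu x)) (gφ x) : ℝ)) + ∫ x in Ω, B ‖gu x‖ * φ x)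
      = ∫ x in Ω, g x * φ x

/-- truncation at level `k`. -/
def Tk (k s : ℝ) : ℝ := max (min k s) (-k)


/-- the critical set `Z_u = {x ∈ Ω : ∇u(x) = 0}`. -/
def critSet (Ω : Set (EucN N)) (u : EucN N → ℝ) : Set (EucN N) :=
  {x ∈ Ω | gradient u x = 0}

/-- (pointwise) divergence of a vector field. -/
def divg (V : EucN N → EucN N) (x : EucN N) : ℝ :=
  ∑ i, fderiv ℝ V x (EuclideanSpace.single i 1) i

/-- `u` is a classical solution of problem (4.2):
`u > 0` in `Ω`, `u = 0` on `∂Ω`, and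
`-div(A(|∇u|)∇u) + B(|∇u|) = ϑ u^q/|x|^p + f` pointwise on `Ω \ (Z_u ∪ {0})`. -/
def IsClassicalSol (Ω : Set (EucN N)) (p q ϑ : ℝ) (A B : ℝ → ℝ)
    (f u : EucN N → ℝ) : Prop :=
  (∀ x ∈ Ω, 0 < u x) ∧ (∀ x ∈ frontier Ω, u x = 0) ∧
  ∀ x ∈ Ω \ (critSet Ω u ∪ {0}),
    -divg (fun z => A ‖gradient u z‖ • gradient u z) x + B ‖gradient u x‖
      = ϑ * u x ^ q / ‖x‖ ^ p + f x

/-- the gradient of `u` is locally `α`-Hölder continuous on `S`. -/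
def LocallyHolderGradOn (u : EucN N → ℝ) (α : NNReal) (S : Set (EucN N)) : Prop :=
  ∀ K : Set (EucN N), IsCompact K → K ⊆ S →
    ∃ C : NNReal, HolderOnWith C α (fun x => gradient u x) K

/-- classical second derivative `∂²u/∂x_i∂x_j`. -/
def secondDeriv (u : EucN N → ℝ) (i j : Fin N) (x : EucN N) : ℝ :=
  fderiv ℝ (fun z => gradient u z i) x (EuclideanSpace.single j 1)

open Classical in
-- classical second derivatives, extended by `0` on the critical set `Z_u`.
def secondDerivT (Ω : Set (EucN N)) (u : EucN N → ℝ) (i j : Fin N) (x : EucN N) : ℝ :=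
  if x ∈ critSet Ω u then 0 else secondDeriv u i j x

/-- `h ∈ L^s_loc(U)`. -/
def MemLpLocOn (U : Set (EucN N)) (s : ENNReal) (h : EucN N → ℝ) : Prop :=
  ∀ K : Set (EucN N), IsCompact K → K ⊆ U → MemLp h s (volume.restrict K)

/-- If a vector field vanishes on a measurable set `s`, then its (junk-extended) Fréchet
derivative vanishes almost everywhere on `s`. -/
lemma fderiv_ae_zero_of_zero_on {N : ℕ} {V : EucN N → EucN N} {s : Set (EucN N)}
    (hs : MeasurableSet s) (hV : ∀ x ∈ s, V x = 0) :
    ∀ᵐ x ∂(volume.restrict s), fderiv ℝ V x = 0 := by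
  have happ : ApproximatesLinearOn V (0 : EucN N →L[ℝ] EucN N) s 0 := by
    intro x hx y hy
    simp [hV x hx, hV y hy]
  have hf' : ∀ x ∈ s, HasFDerivWithinAt V (fderiv ℝ V x) s x := by
    intro x hx
    by_cases h : DifferentiableAt ℝ V x
    · exact h.hasFDerivAt.hasFDerivWithinAt
    · rw [fderiv_zero_of_not_differentiableAt h]
      exact (hasFDerivWithinAt_const (0 : EucN N) x s).congr (fun y hy => hV y hy) (hV x hx)
  have h := happ.norm_fderiv_sub_le volume hs (fun x => fderiv ℝ V x) hf'
  filter_upwards [h] with x hx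
  have hx' : ‖fderiv ℝ V x - 0‖₊ ≤ 0 := hx
  have : ‖fderiv ℝ V x‖₊ = 0 := le_antisymm (by simpa using hx') (zero_le)
  simpa [nnnorm_eq_zero] using this

/-- **Remark 4.3**: for a classical solution of problem (4.2) with nonnegative datum `f`,
solving the equation almost everywhere in `Ω`, the critical set `Z_u` has zero Lebesgue
measure. -/
theorem critical_set_null
    (N : ℕ) (hN : 2 ≤ N) (Ω : Set (EucN N)) (hΩo : IsOpen Ω)
    (hΩb : Bornology.IsBounded Ω) (h0 : (0 : EucN N) ∈ Ω)
    (p q ϑ : ℝ) (hp : 1 < p) (hpN : p < N) (hq : p - 1 < q) (hq' : q < p) (hϑ : 0 < ϑ)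
    -- the function A and its hypotheses
    (A A' : ℝ → ℝ) (hApos : ∀ t > 0, 0 < A t)
    (hAder : ∀ t > 0, HasDerivAt A (A' t) t) (hA'cont : ContinuousOn A' (Set.Ioi 0))
    (c₁ : ℝ) (hc₁ : 0 < c₁)
    (hA2 : ∃ K : ℝ, 1 ≤ K ∧ ∀ t ≥ K, t * A t ≤ c₁ * t ^ (p - 1))
    (c₂ : ℝ) (hc₂ : 0 < c₂)
    (hA3 : ∀ η η' : EucN N,
      c₂ * (‖η‖ + ‖η'‖) ^ (p - 2) * ‖η - η'‖ ^ 2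
        ≤ (inner ℝ (Avec A η - Avec A η') (η - η') : ℝ))
    -- hypothesis (1.10)
    (mA MA : ℝ) (hmA : -1 < mA)
    (hglb : IsGLB ((fun t => t * A' t / A t) '' Set.Ioi 0) mA)
    (hlub : IsLUB ((fun t => t * A' t / A t) '' Set.Ioi 0) MA)
    -- the function B and its hypotheses
    (B B' : ℝ → ℝ) (hBnonneg : ∀ t ≥ 0, 0 ≤ B t) (hB0 : B 0 = 0)
    (hBder : ∀ s ∈ Set.Ici (0 : ℝ), HasDerivWithinAt B (B' s) (Set.Ici 0) s)
    (hB'cont : ContinuousOn B' (Set.Ici 0))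
    (σ : ℝ) (hσ : 0 < σ) (hBσ : ∀ t ≥ 0, σ * t ^ p ≤ B t)
    (Chat : ℝ) (hChat : 0 < Chat) (hB' : ∀ t > 0, B' t ≤ Chat * (t * A t))
    -- the datum `f ∈ W^{1,∞}(Ω̄)`, nonnegative
    (f : EucN N → ℝ) (L : NNReal) (hfL : LipschitzOnWith L f (closure Ω))
    (Mf : ℝ) (hfM : ∀ x ∈ closure Ω, |f x| ≤ Mf)
    (hfpos : ∀ x ∈ Ω, 0 ≤ f x)
    -- the solution `u ∈ C¹(Ω̄∖{0}) ∩ C²(Ω∖(Z_u ∪ {0}))`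
    (u : EucN N → ℝ)
    (huC1 : ContDiffOn ℝ 1 u (closure Ω \ {0}))
    (huC2 : ContDiffOn ℝ 2 u (Ω \ (critSet Ω u ∪ {0})))
    (husol : IsClassicalSol Ω p q ϑ A B f u)
    -- `u` solves the equation almost everywhere in `Ω`
    (husolae : ∀ᵐ x ∂(volume.restrict Ω),
      -divg (fun z => Avec A (gradient u z)) x + B ‖gradient u x‖
        = ϑ * u x ^ q / ‖x‖ ^ p + f x) :
    volume (critSet Ω u) = 0 := by
  classical
  haveI : NeZero N := ⟨by omega⟩
  set V : EucN N → EucN N := fun z => Avec A (gradient u z) with hVdef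
  -- the critical set is measurable
  have hgradmeas : Measurable (fun x => gradient u x) := by
    unfold gradient
    exact ((InnerProductSpace.toDual ℝ (EucN N)).symm.continuous.measurable).comp
      (measurable_fderiv ℝ u)
  have hsmeas : MeasurableSet (critSet Ω u) := by
    have : critSet Ω u = Ω ∩ (fun x => gradient u x) ⁻¹' {0} := by
      ext x; simp [critSet]
    rw [this]
    exact hΩo.measurableSet.inter (hgradmeas (measurableSet_singleton 0))
  -- the vector field vanishes on the critical set
  have hVzero : ∀ x ∈ critSet Ω u, V x = 0 := by
    intro x hx
    have h2 : gradient u x = 0 := hx.2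
    simp [hVdef, Avec, h2]
  -- its derivative vanishes a.e. on the critical set
  have hfd : ∀ᵐ x ∂(volume.restrict (critSet Ω u)), fderiv ℝ V x = 0 :=
    fderiv_ae_zero_of_zero_on hsmeas hVzero
  -- the a.e. equation restricted to the critical set
  have hsub : critSet Ω u ⊆ Ω := fun x hx => hx.1
  have heq : ∀ᵐ x ∂(volume.restrict (critSet Ω u)),
      -divg (fun z => Avec A (gradient u z)) x + B ‖gradient u x‖
        = ϑ * u x ^ q / ‖x‖ ^ p + f x :=
    ae_restrict_of_ae_restrict_of_subset hsub husolae
  have hmem : ∀ᵐ x ∂(volume.restrict (critSet Ω u)), x ∈ critSet Ω u :=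
    ae_restrict_mem hsmeas
  -- a.e. point of the critical set must be the origin
  have key : ∀ᵐ x ∂(volume.restrict (critSet Ω u)), x ∈ ({0} : Set (EucN N)) := by
    filter_upwards [hfd, heq, hmem] with x h1 h2 hx
    by_contra hx0
    have hx0' : x ≠ 0 := by simpa using hx0
    have hxo : x ∈ Ω := hx.1
    have hgrad0 : gradient u x = 0 := hx.2
    have hdiv : divg (fun z => Avec A (gradient u z)) x = 0 := by
      have h1' : fderiv ℝ (fun z => Avec A (gradient u z)) x = 0 := h1
      simp [divg, h1']
    rw [hdiv, hgrad0] at h2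
    have hlhs : -(0:ℝ) + B ‖(0 : EucN N)‖ = 0 := by simp [hB0]
    have hupos : 0 < u x := husol.1 x hxo
    have h3 : 0 < u x ^ q := Real.rpow_pos_of_pos hupos q
    have h4 : 0 < ‖x‖ ^ p := Real.rpow_pos_of_pos (norm_pos_iff.mpr hx0') p
    have h5 : 0 < ϑ * u x ^ q / ‖x‖ ^ p := div_pos (mul_pos hϑ h3) h4
    have h6 : 0 ≤ f x := hfpos x hxo
    rw [hlhs] at h2
    linarith
  -- conclude
  have hzero : volume ({0}ᶜ ∩ critSet Ω u) = 0 := by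
    have h := ae_iff.1 key
    have hset : {a : EucN N | a ∉ ({0} : Set (EucN N))} = ({0}ᶜ : Set (EucN N)) := rfl
    rw [hset, Measure.restrict_apply (measurableSet_singleton 0).compl] at h
    exact h
  have hsplit : critSet Ω u ⊆ ({0}ᶜ ∩ critSet Ω u) ∪ ({0} : Set (EucN N)) := by
    intro x hx
    by_cases h : x ∈ ({0} : Set (EucN N))
    · exact Or.inr h
    · exact Or.inl ⟨h, hx⟩
  refine le_antisymm ?_ (zero_le)
  calc volume (critSet Ω u) ≤ volume (({0}ᶜ ∩ critSet Ω u) ∪ ({0} : Set (EucN N))) :=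
        measure_mono hsplit
    _ ≤ volume ({0}ᶜ ∩ critSet Ω u) + volume ({0} : Set (EucN N)) := measure_union_le _ _
    _ = 0 := by rw [hzero, measure_singleton]; simp
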